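/- arXiv:1312.6737 — 9 statements merged into one kernel-verified Lean document; each statement's English description precedes it below -/
import Mathlib

section
/- Let d ≥ 1, let A, B, C be d×d complex positive semidefinite matrices and let x, y be real numbers. Then the matrix x²·tr(B·C)·A + y²·tr(B·A)·C − x·y·(A·B·C) − x·y·(C·B·A) is positive semidefinite. -/
/-!
Write `p = tr (B C)`, `q = tr (B A)` and, with `S = √B`, put `X = S A`, `Y = S C`, so that
`XᴴX = A B A`, `YᴴY = C B C` and `XᴴY + YᴴX = A B C + C B A`. Conjugating `N ≤ tr N • 1` by `√A`
for `N = √A B √A` gives `A B A ≤ q • A`, and likewise `C B C ≤ p • C`. When `p, q > 0`, expanding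
`0 ≤ ZᴴZ` for `Z = (x p) • X - (y q) • Y` and dividing by `p q` gives the claim; when `q = 0` the
bound `XᴴX ≤ 0` forces `X = 0` (symmetrically for `p = 0`) and the claim is trivial.
-/

open scoped ComplexOrder MatrixOrder

namespace Matrix

variable {𝕜 : Type*} [RCLike 𝕜] {n : Type*} [Fintype n]

lemma le_re_trace_smul_one [DecidableEq n] {N : Matrix n n 𝕜} (hN : 0 ≤ N) :
    N ≤ RCLike.re N.trace • (1 : Matrix n n 𝕜) := by
  have hN' := nonneg_iff_posSemidef.mp hN
  rw [← Algebra.algebraMap_eq_smul_one]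
  refine le_algebraMap_of_spectrum_le fun r hr => ?_
  rw [hN'.isHermitian.spectrum_real_eq_range_eigenvalues] at hr
  obtain ⟨i, rfl⟩ := hr
  rw [hN'.isHermitian.trace_eq_sum_eigenvalues, map_sum]
  simp only [RCLike.ofReal_re]
  exact Finset.single_le_sum (fun j _ => hN'.eigenvalues_nonneg j) (Finset.mem_univ i)

lemma trace_mul_nonneg [DecidableEq n] {A B : Matrix n n 𝕜} (hA : 0 ≤ A) (hB : 0 ≤ B) :
    0 ≤ (A * B).trace := by
  rw [← CFC.sqrt_mul_sqrt_self A hA, ← trace_mul_cycle]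
  have hSBS := (CFC.sqrt_nonneg A).isSelfAdjoint.conjugate_nonneg hB
  exact (nonneg_iff_posSemidef.mp hSBS).trace_nonneg

lemma mul_mul_self_le_re_trace_smul [DecidableEq n] {A B : Matrix n n 𝕜} (hA : 0 ≤ A)
    (hB : 0 ≤ B) : A * B * A ≤ RCLike.re (B * A).trace • A := by
  set S := CFC.sqrt A
  have hS : IsSelfAdjoint S := (CFC.sqrt_nonneg A).isSelfAdjoint
  have hSS : S * S = A := CFC.sqrt_mul_sqrt_self A hA
  have h := star_left_conjugate_le_conjugate (le_re_trace_smul_one (hS.conjugate_nonneg hB)) S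
  rw [hS.star_eq, trace_mul_cycle, hSS, trace_mul_comm, mul_smul_comm, mul_one, smul_mul_assoc,
    hSS] at h
  simpa only [← hSS, mul_assoc] using h

lemma smul_conjTranspose_mul_add_le {X Y A C : Matrix n n 𝕜} {p q : ℝ} (hA : 0 ≤ A) (hC : 0 ≤ C)
    (hp : 0 ≤ p) (hq : 0 ≤ q) (hX : Xᴴ * X ≤ q • A) (hY : Yᴴ * Y ≤ p • C) (x y : ℝ) :
    (x * y) • (Xᴴ * Y + Yᴴ * X) ≤ (x ^ 2 * p) • A + (y ^ 2 * q) • C := by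
  have hRHS : 0 ≤ (x ^ 2 * p) • A + (y ^ 2 * q) • C :=
    add_nonneg (smul_nonneg (by positivity) hA) (smul_nonneg (by positivity) hC)
  rcases hq.eq_or_lt with rfl | hq
  · obtain rfl : X = 0 := conjTranspose_mul_self_eq_zero.mp <|
      le_antisymm (by simpa using hX) (posSemidef_conjTranspose_mul_self X).nonneg
    simpa using hRHS
  rcases hp.eq_or_lt with rfl | hp
  · obtain rfl : Y = 0 := conjTranspose_mul_self_eq_zero.mp <|
      le_antisymm (by simpa using hY) (posSemidef_conjTranspose_mul_self Y).nonneg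
    simpa using hRHS
  set Z := (x * p) • X - (y * q) • Y
  have hZ : Zᴴ * Z = (x * p) ^ 2 • (Xᴴ * X) + (y * q) ^ 2 • (Yᴴ * Y)
      - (p * q) • ((x * y) • (Xᴴ * Y + Yᴴ * X)) := by
    simp only [Z, conjTranspose_sub, conjTranspose_smul, star_trivial, sub_mul, mul_sub,
      smul_mul_smul_comm]
    module
  rw [← smul_le_smul_iff_of_pos_left (mul_pos hp hq)]
  calc (p * q) • ((x * y) • (Xᴴ * Y + Yᴴ * X))
      ≤ (x * p) ^ 2 • (Xᴴ * X) + (y * q) ^ 2 • (Yᴴ * Y) :=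
        sub_nonneg.mp (hZ ▸ (posSemidef_conjTranspose_mul_self Z).nonneg)
    _ ≤ (x * p) ^ 2 • (q • A) + (y * q) ^ 2 • (p • C) := by gcongr
    _ = (p * q) • ((x ^ 2 * p) • A + (y ^ 2 * q) • C) := by module

theorem smul_mul_mul_add_le [DecidableEq n] {A B C : Matrix n n 𝕜} (hA : 0 ≤ A) (hB : 0 ≤ B)
    (hC : 0 ≤ C) (x y : ℝ) :
    (x * y) • (A * B * C + C * B * A) ≤
      (x ^ 2 * RCLike.re (B * C).trace) • A + (y ^ 2 * RCLike.re (B * A).trace) • C := by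
  set S := CFC.sqrt B
  have hS : Sᴴ = S := (CFC.sqrt_nonneg B).isSelfAdjoint
  have hSS : S * S = B := CFC.sqrt_mul_sqrt_self B hB
  have hform {M N : Matrix n n 𝕜} (hM : Mᴴ = M) : (S * M)ᴴ * (S * N) = M * B * N := by
    simp only [conjTranspose_mul, hS, hM, ← hSS, mul_assoc]
  have hre {M : Matrix n n 𝕜} (hM : 0 ≤ M) : 0 ≤ RCLike.re (B * M).trace :=
    (RCLike.nonneg_iff.mp (trace_mul_nonneg hB hM)).1
  have h := smul_conjTranspose_mul_add_le hA hC (hre hC) (hre hA)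
    (hform hA.isSelfAdjoint ▸ mul_mul_self_le_re_trace_smul hA hB)
    (hform hC.isSelfAdjoint ▸ mul_mul_self_le_re_trace_smul hC hB) x y
  rwa [hform hA.isSelfAdjoint, hform hC.isSelfAdjoint] at h

end Matrix

theorem positivity_lemma_general (d : ℕ)
    (A B C : Matrix (Fin d) (Fin d) ℂ)
    (hA : A.PosSemidef) (hB : B.PosSemidef) (hC : C.PosSemidef)
    (x y : ℝ) :
    (((x : ℂ)^2 * (B * C).trace) • A + ((y : ℂ)^2 * (B * A).trace) • C
      - ((x : ℂ) * (y : ℂ)) • (A * B * C) - ((x : ℂ) * (y : ℂ)) • (C * B * A)).PosSemidef := by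
  have hreal {M : Matrix (Fin d) (Fin d) ℂ} (hM : M.PosSemidef) :
      (B * M).trace = (B * M).trace.re :=
    Complex.eq_re_of_ofReal_le (r := 0) (by simpa using Matrix.trace_mul_nonneg hB.nonneg hM.nonneg)
  rw [← Matrix.nonneg_iff_posSemidef, sub_sub, ← smul_add, sub_nonneg, hreal hC, hreal hA]
  simpa [← Complex.ofReal_pow, ← Complex.ofReal_mul, Complex.coe_smul] using
    Matrix.smul_mul_mul_add_le hA.nonneg hB.nonneg hC.nonneg x y

theorem positivity_lemma (d : ℕ) (hd : 1 ≤ d)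
    (A B C : Matrix (Fin d) (Fin d) ℂ)
    (hA : A.PosSemidef) (hB : B.PosSemidef) (hC : C.PosSemidef)
    (x y : ℝ) :
    (((x : ℂ)^2 * (B * C).trace) • A + ((y : ℂ)^2 * (B * A).trace) • C
      - ((x : ℂ) * (y : ℂ)) • (A * B * C) - ((x : ℂ) * (y : ℂ)) • (C * B * A)).PosSemidef :=
  positivity_lemma_general d A B C hA hB hC x y
end

section
/- Let d ≥ 1, let W₂, W₃, W₄ be d×d complex positive semidefinite matrices and let v, w be real numbers. Then the matrix v²·tr(W₂·(I+W₃))·W₄ + w²·tr(W₄·(I+W₃))·W₂ + v·w·(W₄·(I+W₃)·W₂ + W₂·(I+W₃)·W₄) is positive semidefinite. -/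
/-!
The matrix `x² tr(CB) A + y² tr(AB) C - xy (ABC + CBA)` is additive in each of `A`, `B`, `C`,
and every positive semidefinite matrix is a sum of rank-one matrices `a aᴴ`. For
`A = a aᴴ`, `B = b bᴴ`, `C = c cᴴ` it equals `s sᴴ` with `s = x ⟨b, c⟩ a - y ⟨b, a⟩ c`,
hence it is positive semidefinite for all positive semidefinite `A`, `B`, `C`.
-/

open Matrix
open scoped ComplexOrder

variable {𝕜 n : Type*} [RCLike 𝕜] [Fintype n]

def gainTerm (x y : ℝ) (A B C : Matrix n n 𝕜) : Matrix n n 𝕜 :=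
  ((x : 𝕜) ^ 2 * (C * B).trace) • A + ((y : 𝕜) ^ 2 * (A * B).trace) • C
    - ((x : 𝕜) * y) • (A * B * C + C * B * A)

section

variable (x y : ℝ) {ι : Type*} (s : Finset ι)

lemma gainTerm_sum_left (A : ι → Matrix n n 𝕜) (B C : Matrix n n 𝕜) :
    gainTerm x y (∑ i ∈ s, A i) B C = ∑ i ∈ s, gainTerm x y (A i) B C :=
  map_sum (AddMonoidHom.mk' (gainTerm x y · B C) fun A₁ A₂ => by
    simp only [gainTerm, add_mul, mul_add, trace_add]
    module) A s

lemma gainTerm_sum_middle (A : Matrix n n 𝕜) (B : ι → Matrix n n 𝕜) (C : Matrix n n 𝕜) :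
    gainTerm x y A (∑ i ∈ s, B i) C = ∑ i ∈ s, gainTerm x y A (B i) C :=
  map_sum (AddMonoidHom.mk' (gainTerm x y A · C) fun B₁ B₂ => by
    simp only [gainTerm, add_mul, mul_add, trace_add]
    module) B s

lemma gainTerm_sum_right (A B : Matrix n n 𝕜) (C : ι → Matrix n n 𝕜) :
    gainTerm x y A B (∑ i ∈ s, C i) = ∑ i ∈ s, gainTerm x y A B (C i) :=
  map_sum (AddMonoidHom.mk' (gainTerm x y A B ·) fun C₁ C₂ => by
    simp only [gainTerm, add_mul, mul_add, trace_add]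
    module) C s

end

lemma gainTerm_vecMulVec (x y : ℝ) (a b c : n → 𝕜) :
    gainTerm x y (vecMulVec a (star a)) (vecMulVec b (star b)) (vecMulVec c (star c)) =
      let s := ((x : 𝕜) * (star b ⬝ᵥ c)) • a - ((y : 𝕜) * (star b ⬝ᵥ a)) • c
      vecMulVec s (star s) := by
  have hcb : star c ⬝ᵥ b = star (star b ⬝ᵥ c) := by rw [star_dotProduct]
  have hab : star a ⬝ᵥ b = star (star b ⬝ᵥ a) := by rw [star_dotProduct]
  simp only [gainTerm, vecMulVec_mul_vecMulVec, vecMulVec_smul, Matrix.smul_mul, trace_smul,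
    trace_vecMulVec, dotProduct_comm c (star b), dotProduct_comm a (star b), star_sub, star_smul,
    star_mul', RCLike.star_def, RCLike.conj_ofReal, vecMulVec_sub, sub_vecMulVec, smul_vecMulVec,
    hcb, hab]
  module

theorem posSemidef_gainTerm (x y : ℝ) {A B C : Matrix n n 𝕜}
    (hA : A.PosSemidef) (hB : B.PosSemidef) (hC : C.PosSemidef) :
    (gainTerm x y A B C).PosSemidef := by
  obtain ⟨_, a, rfl⟩ := posSemidef_iff_eq_sum_vecMulVec.mp hA
  obtain ⟨_, b, rfl⟩ := posSemidef_iff_eq_sum_vecMulVec.mp hB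
  obtain ⟨_, c, rfl⟩ := posSemidef_iff_eq_sum_vecMulVec.mp hC
  rw [gainTerm_sum_left]
  refine posSemidef_sum _ fun _ _ => ?_
  rw [gainTerm_sum_middle]
  refine posSemidef_sum _ fun _ _ => ?_
  rw [gainTerm_sum_right]
  refine posSemidef_sum _ fun _ _ => ?_
  rw [gainTerm_vecMulVec]
  exact posSemidef_vecMulVec_self_star _

theorem gain_term_posSemidef_general (d : ℕ)
    (W₂ W₃ W₄ : Matrix (Fin d) (Fin d) ℂ)
    (h₂ : W₂.PosSemidef) (h₃ : W₃.PosSemidef) (h₄ : W₄.PosSemidef)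
    (v w : ℝ) :
    (((v : ℂ)^2 * (W₂ * (1 + W₃)).trace) • W₄
      + ((w : ℂ)^2 * (W₄ * (1 + W₃)).trace) • W₂
      + ((v : ℂ) * (w : ℂ)) • (W₄ * (1 + W₃) * W₂ + W₂ * (1 + W₃) * W₄)).PosSemidef := by
  have h := posSemidef_gainTerm v (-w) h₄ (PosSemidef.one.add h₃) h₂
  simp only [gainTerm, RCLike.ofReal_neg, neg_sq, mul_neg, neg_smul, sub_neg_eq_add] at h
  exact h

theorem gain_term_posSemidef (d : ℕ) (hd : 1 ≤ d)
    (W₂ W₃ W₄ : Matrix (Fin d) (Fin d) ℂ)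
    (h₂ : W₂.PosSemidef) (h₃ : W₃.PosSemidef) (h₄ : W₄.PosSemidef)
    (v w : ℝ) :
    (((v : ℂ)^2 * (W₂ * (1 + W₃)).trace) • W₄
      + ((w : ℂ)^2 * (W₄ * (1 + W₃)).trace) • W₂
      + ((v : ℂ) * (w : ℂ)) • (W₄ * (1 + W₃) * W₂ + W₂ * (1 + W₃) * W₄)).PosSemidef :=
  gain_term_posSemidef_general d W₂ W₃ W₄ h₂ h₃ h₄ v w
end

section
/- The function g(f, a) = −log(cosh(a) − cosh(f)) is strictly convex on the convex open set S = {(f, a) ∈ ℝ² : |f| + a < 0}. -/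
open Real

lemma negLogSinh_strictConvexOn :
    StrictConvexOn ℝ (Set.Ioi (0:ℝ)) (fun x : ℝ => -Real.log (Real.sinh x)) := by
  have hderiv : ∀ x ∈ Set.Ioi (0:ℝ),
      HasDerivAt (fun y : ℝ => -Real.log (Real.sinh y))
        (-(Real.cosh x / Real.sinh x)) x := by
    intro x hx
    have hs : Real.sinh x ≠ 0 := ne_of_gt (Real.sinh_pos_iff.2 hx)
    exact ((Real.hasDerivAt_sinh x).log hs).neg
  apply strictConvexOn_of_deriv2_pos (convex_Ioi 0)
  · exact fun x hx => (hderiv x hx).continuousAt.continuousWithinAt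
  · intro x hx
    rw [interior_Ioi] at hx
    have hs : (0:ℝ) < Real.sinh x := Real.sinh_pos_iff.2 hx
    have hE : deriv (fun y : ℝ => -Real.log (Real.sinh y))
        =ᶠ[nhds x] fun y => -(Real.cosh y / Real.sinh y) :=
      Filter.eventually_of_mem (isOpen_Ioi.mem_nhds hx) fun y hy => (hderiv y hy).deriv
    have h2 : HasDerivAt (fun y : ℝ => -(Real.cosh y / Real.sinh y))
        (-((Real.sinh x * Real.sinh x - Real.cosh x * Real.cosh x) / Real.sinh x ^ 2)) x :=
      (((Real.hasDerivAt_cosh x).div (Real.hasDerivAt_sinh x) hs.ne')).neg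
    have : (deriv^[2] fun y : ℝ => -Real.log (Real.sinh y)) x
        = -((Real.sinh x * Real.sinh x - Real.cosh x * Real.cosh x) / Real.sinh x ^ 2) := by
      show deriv (deriv fun y : ℝ => -Real.log (Real.sinh y)) x = _
      rw [hE.deriv_eq, h2.deriv]
    rw [this]
    have hone : Real.cosh x ^ 2 - Real.sinh x ^ 2 = 1 := Real.cosh_sq_sub_sinh_sq x
    have h1 : Real.sinh x * Real.sinh x - Real.cosh x * Real.cosh x = -1 := by nlinarith
    rw [h1, neg_div, neg_neg]
    exact div_pos one_pos (pow_pos hs 2)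

lemma cosh_sub_cosh' (a f : ℝ) : Real.cosh a - Real.cosh f
    = 2 * Real.sinh ((a+f)/2) * Real.sinh ((a-f)/2) := by
  calc Real.cosh a - Real.cosh f
      = Real.cosh ((a+f)/2 + (a-f)/2) - Real.cosh ((a+f)/2 - (a-f)/2) := by
        rw [show (a+f)/2 + (a-f)/2 = a by ring, show (a+f)/2 - (a-f)/2 = f by ring]
    _ = _ := by rw [Real.cosh_add, Real.cosh_sub]; ring

lemma g_eq {p : ℝ × ℝ} (hp : |p.1| + p.2 < 0) :
    -Real.log (Real.cosh p.2 - Real.cosh p.1)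
      = -Real.log 2 + -Real.log (Real.sinh (-(p.2+p.1)/2))
        + -Real.log (Real.sinh ((p.1-p.2)/2)) := by
  have hu : (0:ℝ) < -(p.2+p.1)/2 := by
    have := le_abs_self p.1; linarith
  have hv : (0:ℝ) < (p.1-p.2)/2 := by
    have := neg_abs_le p.1; linarith
  have su : (0:ℝ) < Real.sinh (-(p.2+p.1)/2) := Real.sinh_pos_iff.2 hu
  have sv : (0:ℝ) < Real.sinh ((p.1-p.2)/2) := Real.sinh_pos_iff.2 hv
  have e1 : Real.sinh ((p.2+p.1)/2) = -Real.sinh (-(p.2+p.1)/2) := by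
    rw [show -(p.2+p.1)/2 = -((p.2+p.1)/2) by ring, Real.sinh_neg]; ring
  have e2 : Real.sinh ((p.2-p.1)/2) = -Real.sinh ((p.1-p.2)/2) := by
    rw [show (p.1-p.2)/2 = -((p.2-p.1)/2) by ring, Real.sinh_neg]; ring
  have hprod : Real.cosh p.2 - Real.cosh p.1
      = 2 * Real.sinh (-(p.2+p.1)/2) * Real.sinh ((p.1-p.2)/2) := by
    rw [cosh_sub_cosh' p.2 p.1, e1, e2]; ring
  rw [hprod, Real.log_mul (by positivity) sv.ne', Real.log_mul (by norm_num) su.ne']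
  ring

theorem free_energy_strictConvexOn :
    StrictConvexOn ℝ {p : ℝ × ℝ | |p.1| + p.2 < 0}
      (fun p : ℝ × ℝ => -Real.log (Real.cosh p.2 - Real.cosh p.1)) := by
  have hconv : Convex ℝ {p : ℝ × ℝ | |p.1| + p.2 < 0} := by
    intro x hx y hy s t hs ht hst
    simp only [Set.mem_setOf_eq] at hx hy ⊢
    have h1 : |(s • x + t • y).1| ≤ s * |x.1| + t * |y.1| := by
      have : (s • x + t • y).1 = s * x.1 + t * y.1 := rfl
      rw [this]
      calc |s * x.1 + t * y.1| ≤ |s * x.1| + |t * y.1| := abs_add_le _ _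
        _ = s * |x.1| + t * |y.1| := by
          rw [abs_mul, abs_mul, abs_of_nonneg hs, abs_of_nonneg ht]
    have h2 : (s • x + t • y).2 = s * x.2 + t * y.2 := rfl
    have hAB : s * (|x.1| + x.2) + t * (|y.1| + y.2) < 0 := by
      simpa [smul_eq_mul] using (convex_Iio (0:ℝ)) hx hy hs ht hst
    rw [h2]
    ring_nf at hAB h1 ⊢
    linarith [h1, hAB]
  refine ⟨hconv, ?_⟩
  intro p hp q hq hpq s t hs ht hst
  have hp' : |p.1| + p.2 < 0 := hp
  have hq' : |q.1| + q.2 < 0 := hq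
  have hupq : -(p.2+p.1)/2 ∈ Set.Ioi (0:ℝ) := by
    have := le_abs_self p.1; simp only [Set.mem_Ioi]; linarith
  have huq : -(q.2+q.1)/2 ∈ Set.Ioi (0:ℝ) := by
    have := le_abs_self q.1; simp only [Set.mem_Ioi]; linarith
  have hvp : (p.1-p.2)/2 ∈ Set.Ioi (0:ℝ) := by
    have := neg_abs_le p.1; simp only [Set.mem_Ioi]; linarith
  have hvq : (q.1-q.2)/2 ∈ Set.Ioi (0:ℝ) := by
    have := neg_abs_le q.1; simp only [Set.mem_Ioi]; linarith
  have hxS : |(s • p + t • q).1| + (s • p + t • q).2 < 0 :=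
    hconv hp hq hs.le ht.le hst
  have hx1 : (s • p + t • q).1 = s * p.1 + t * q.1 := rfl
  have hx2 : (s • p + t • q).2 = s * p.2 + t * q.2 := rfl
  have hux : -((s • p + t • q).2 + (s • p + t • q).1)/2
      = s * (-(p.2+p.1)/2) + t * (-(q.2+q.1)/2) := by rw [hx1, hx2]; ring
  have hvx : ((s • p + t • q).1 - (s • p + t • q).2)/2
      = s * ((p.1-p.2)/2) + t * ((q.1-q.2)/2) := by rw [hx1, hx2]; ring
  have hne : -(p.2+p.1)/2 ≠ -(q.2+q.1)/2 ∨ (p.1-p.2)/2 ≠ (q.1-q.2)/2 := by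
    by_contra hcon
    push_neg at hcon
    obtain ⟨h1, h2⟩ := hcon
    exact hpq (Prod.ext (by linarith) (by linarith))
  have hcvx := negLogSinh_strictConvexOn.convexOn
  have key : -Real.log (Real.sinh (s * (-(p.2+p.1)/2) + t * (-(q.2+q.1)/2)))
        + -Real.log (Real.sinh (s * ((p.1-p.2)/2) + t * ((q.1-q.2)/2)))
      < s * (-Real.log (Real.sinh (-(p.2+p.1)/2)) + -Real.log (Real.sinh ((p.1-p.2)/2)))
        + t * (-Real.log (Real.sinh (-(q.2+q.1)/2)) + -Real.log (Real.sinh ((q.1-q.2)/2))) := by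
    rcases hne with hne | hne
    · have A := negLogSinh_strictConvexOn.2 hupq huq hne hs ht hst
      have B := hcvx.2 hvp hvq hs.le ht.le hst
      simp only [smul_eq_mul] at A B
      have hsub : s = 1 - t := by linarith
      rw [hsub] at A B ⊢
      linarith [A, B]
    · have A := hcvx.2 hupq huq hs.le ht.le hst
      have B := negLogSinh_strictConvexOn.2 hvp hvq hne hs ht hst
      simp only [smul_eq_mul] at A B
      have hsub : s = 1 - t := by linarith
      rw [hsub] at A B ⊢
      linarith [A, B]
  have gx := g_eq hxS
  have gp := g_eq hp'
  have gq := g_eq hq'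
  simp only [smul_eq_mul]
  show -Real.log (Real.cosh (s • p + t • q).2 - Real.cosh (s • p + t • q).1)
      < s * (-Real.log (Real.cosh p.2 - Real.cosh p.1))
        + t * (-Real.log (Real.cosh q.2 - Real.cosh q.1))
  rw [gx, gp, gq, hux, hvx]
  have hsub : s = 1 - t := by linarith
  rw [hsub] at key ⊢
  linarith [key]
end

section
/- Let f, a be real numbers with |f| < |a|, and let g(f, a) = −log(cosh(a) − cosh(f)). Then the Hessian matrix of g at (f, a), i.e. the 2×2 matrix with entries ∂²g/∂f², ∂²g/∂f∂a, ∂²g/∂a∂f, ∂²g/∂a², is positive definite; its determinant equals 1/(cosh(a) − cosh(f))² and its trace equals 2·(cosh(a)·cosh(f) − 1)/(cosh(a) − cosh(f))². -/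
/-!
With `D = cosh a - cosh f`, the second derivatives of `g` are `(cosh f cosh a - 1) / D²` on the
diagonal and `-(sinh f sinh a) / D²` off it. Since `cosh² - sinh² = 1`, the squares of these two
numerators differ by exactly `D²`, so the determinant is `D⁻²`; as the diagonal entry is positive,
the 2×2 criterion (positive corner, positive determinant) gives positive definiteness.
-/

open Real Filter Topology

theorem Matrix.posDef_fin_two_of {K : Type*} [Field K] [LinearOrder K] [IsStrictOrderedRing K]
    [StarRing K] [TrivialStar K] {p q r : K} (hp : 0 < p) (hdet : 0 < p * r - q ^ 2) :
    (!![p, q; q, r]).PosDef := by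
  refine Matrix.PosDef.of_dotProduct_mulVec_pos ?_ fun x hx => ?_
  · ext i j
    fin_cases i <;> fin_cases j <;> simp
  have hx : x 0 ≠ 0 ∨ x 1 ≠ 0 := by
    by_contra! h0
    exact hx (funext fun i => by fin_cases i <;> simp [h0.1, h0.2])
  simp only [dotProduct, Matrix.mulVec, Fin.sum_univ_two, star_trivial, Matrix.cons_val',
    Matrix.cons_val_zero, Matrix.cons_val_one, Matrix.of_apply, Matrix.cons_val_fin_one,
    Matrix.empty_val']
  have complete_square : p * (x 0 * (p * x 0 + q * x 1) + x 1 * (q * x 0 + r * x 1))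
      = (p * x 0 + q * x 1) ^ 2 + (p * r - q ^ 2) * x 1 ^ 2 := by ring
  rw [← mul_pos_iff_of_pos_left hp, complete_square]
  rcases eq_or_ne (x 1) 0 with h1 | h1
  · have h0 : x 0 ≠ 0 := hx.resolve_right (not_not.2 h1)
    rw [h1]
    simpa using sq_pos_of_ne_zero (mul_ne_zero hp.ne' h0)
  · exact add_pos_of_nonneg_of_pos (sq_nonneg _) (mul_pos hdet (sq_pos_of_ne_zero h1))

noncomputable def freeEnergy (u v : ℝ) : ℝ := -log (cosh v - cosh u)

/-- Holds everywhere because `Real.log` is even; it turns derivatives in the second variable into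
derivatives in the first. -/
theorem freeEnergy_comm (u v : ℝ) : freeEnergy u v = freeEnergy v u := by
  rw [freeEnergy, freeEnergy, ← neg_sub, log_neg_eq_log]

section Derivatives

variable {u v : ℝ}

theorem hasDerivAt_freeEnergy_left (h : cosh u ≠ cosh v) :
    HasDerivAt (freeEnergy · v) (sinh u / (cosh v - cosh u)) u := by
  have hlog : HasDerivAt (freeEnergy · v) (-(-sinh u / (cosh v - cosh u))) u :=
    (((hasDerivAt_cosh u).const_sub (cosh v)).log (sub_ne_zero.2 h.symm)).neg
  rwa [neg_div, neg_neg] at hlog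

theorem hasDerivAt_freeEnergy_right (h : cosh u ≠ cosh v) :
    HasDerivAt (freeEnergy u) (sinh v / (cosh u - cosh v)) v := by
  rw [show freeEnergy u = (freeEnergy · u) from funext (freeEnergy_comm u)]
  exact hasDerivAt_freeEnergy_left h.symm

theorem deriv_deriv_freeEnergy_left (h : cosh u ≠ cosh v) :
    deriv (deriv (freeEnergy · v)) u = (cosh u * cosh v - 1) / (cosh v - cosh u) ^ 2 := by
  have hderiv : deriv (freeEnergy · v) =ᶠ[𝓝 u] fun x => sinh x / (cosh v - cosh x) :=
    (continuous_cosh.continuousAt.eventually_ne h).mono fun x hx =>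
      (hasDerivAt_freeEnergy_left hx).deriv
  have hquot : HasDerivAt (fun x => sinh x / (cosh v - cosh x)) _ u :=
    (hasDerivAt_sinh u).div ((hasDerivAt_cosh u).const_sub (cosh v)) (sub_ne_zero.2 h.symm)
  rw [hderiv.deriv_eq, hquot.deriv]
  congr 1
  linear_combination -cosh_sq_sub_sinh_sq u

theorem deriv_deriv_freeEnergy_mixed (h : cosh u ≠ cosh v) :
    deriv (fun x => deriv (freeEnergy x) v) u = -(sinh u * sinh v) / (cosh u - cosh v) ^ 2 := by
  have hderiv : (fun x => deriv (freeEnergy x) v) =ᶠ[𝓝 u] fun x => sinh v / (cosh x - cosh v) :=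
    (continuous_cosh.continuousAt.eventually_ne h).mono fun x hx =>
      (hasDerivAt_freeEnergy_right hx).deriv
  have hquot : HasDerivAt (fun x => sinh v / (cosh x - cosh v)) _ u :=
    (hasDerivAt_const u (sinh v)).div ((hasDerivAt_cosh u).sub_const (cosh v)) (sub_ne_zero.2 h)
  rw [hderiv.deriv_eq, hquot.deriv]
  ring

theorem hessian_freeEnergy (h : cosh u ≠ cosh v) :
    !![deriv (deriv (freeEnergy · v)) u, deriv (fun x => deriv (freeEnergy x) v) u;
       deriv (fun y => deriv (freeEnergy · y) u) v, deriv (deriv (freeEnergy u)) v] =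
      ((cosh v - cosh u) ^ 2)⁻¹ •
        !![cosh u * cosh v - 1, -(sinh u * sinh v); -(sinh u * sinh v), cosh u * cosh v - 1] := by
  have hflip (w : ℝ) : (freeEnergy · w) = freeEnergy w := funext fun x => freeEnergy_comm x w
  rw [deriv_deriv_freeEnergy_left h, deriv_deriv_freeEnergy_mixed h, ← hflip u,
    deriv_deriv_freeEnergy_left h.symm]
  simp only [hflip]
  rw [deriv_deriv_freeEnergy_mixed h.symm]
  ext i j
  fin_cases i <;> fin_cases j <;> simp <;> ring

end Derivatives

theorem sq_cosh_mul_cosh_sub_one_sub_sq_sinh_mul_sinh (u v : ℝ) :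
    (cosh u * cosh v - 1) ^ 2 - (sinh u * sinh v) ^ 2 = (cosh v - cosh u) ^ 2 := by
  linear_combination (cosh v ^ 2 - 1) * cosh_sq_sub_sinh_sq u + sinh u ^ 2 * cosh_sq_sub_sinh_sq v

theorem hessian_free_energy (f a : ℝ) (h : |f| < |a|) :
    let g : ℝ → ℝ → ℝ := fun u v => -Real.log (Real.cosh v - Real.cosh u)
    let H : Matrix (Fin 2) (Fin 2) ℝ :=
      !![deriv (fun u => deriv (fun v => g v a) u) f,
         deriv (fun u => deriv (fun w => g u w) a) f;
         deriv (fun w => deriv (fun v => g v w) f) a,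
         deriv (fun w => deriv (fun v => g f v) w) a]
    H.PosDef ∧ H.det = 1 / (Real.cosh a - Real.cosh f)^2
      ∧ H.trace = 2 * (Real.cosh a * Real.cosh f - 1) / (Real.cosh a - Real.cosh f)^2 := by
  intro g H
  have hlt : cosh f < cosh a := cosh_lt_cosh.2 h
  have hH : H = ((cosh a - cosh f) ^ 2)⁻¹ •
      !![cosh f * cosh a - 1, -(sinh f * sinh a); -(sinh f * sinh a), cosh f * cosh a - 1] :=
    hessian_freeEnergy hlt.ne
  refine ⟨?_, ?_, ?_⟩
  · have hc : 1 < cosh f * cosh a :=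
      one_lt_mul_of_le_of_lt (one_le_cosh f) ((one_le_cosh f).trans_lt hlt)
    rw [hH]
    refine (Matrix.posDef_fin_two_of (sub_pos.2 hc) ?_).smul (by positivity)
    rw [← sq, neg_sq, sq_cosh_mul_cosh_sub_one_sub_sq_sinh_mul_sinh]
    positivity
  · rw [hH, Matrix.det_smul, Matrix.det_fin_two_of, ← sq, ← sq, neg_sq,
      sq_cosh_mul_cosh_sub_one_sub_sq_sinh_mul_sinh, Fintype.card_fin]
    field_simp
  · rw [hH, Matrix.trace_smul, Matrix.trace_fin_two_of, smul_eq_mul]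
    ring
end

section
/- Let N ≥ 1 and let I = [−1/4, 1/4]. Suppose f, g : I → ℝ are continuous and a, b ∈ ℝ^N satisfy a_σ < −|f(k)| and b_σ < −|g(k)| for all k ∈ I and all σ. Define h_{f,a}(k) = Σ_σ (−sinh f(k))/(cosh a_σ − cosh f(k)) and ε_{f,a,σ} = ∫_I (−sinh a_σ/(cosh a_σ − cosh f(k)) − 1) dk, and analogously for (g, b). If h_{f,a}(k) = h_{g,b}(k) for all k ∈ I and ε_{f,a,σ} = ε_{g,b,σ} for all σ, then f = g on I and a = b. -/
/-!
On `c < -|u|` put `F (u, c) = -log (cosh c - cosh u)`; then `hDensity = -∂F/∂u` and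
`εDensity + 1 = ∂F/∂c`, so `gradientPairing` is `⟪∇F p₁ - ∇F p₂, p₁ - p₂⟫`. In the variables
`x = u - c > 0`, `y = -u - c > 0` one has `hDensity = n x - n y` and `εDensity = n x + n y` for the
Bose function `n x = 1 / (eˣ - 1)`, and the pairing becomes `-(Δn(x) Δx + Δn(y) Δy)`: it is
nonnegative, and zero only if the two points agree, because `n` is strictly decreasing.
Summed over `σ` and integrated over `k`, the pairing of `(f, a)` with `(g, b)` vanishes, since the
`h`-part cancels pointwise and the `ε`-part after integration. Being continuous and nonnegative, it
then vanishes at every `k`, and hence so does each of its terms.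
-/

open Real Set MeasureTheory

section StrictAnti

variable {R : Type*} [CommRing R] [LinearOrder R] [IsStrictOrderedRing R] {φ : R → R} {s : Set R}
  {x y : R}

lemma StrictAntiOn.sub_mul_sub_nonneg (hφ : StrictAntiOn φ s) (hx : x ∈ s) (hy : y ∈ s) :
    0 ≤ (φ y - φ x) * (x - y) := by
  rcases lt_trichotomy x y with h | rfl | h
  · nlinarith [hφ hx hy h]
  · simp
  · nlinarith [hφ hy hx h]

lemma StrictAntiOn.sub_mul_sub_eq_zero_iff (hφ : StrictAntiOn φ s) (hx : x ∈ s) (hy : y ∈ s) :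
    (φ y - φ x) * (x - y) = 0 ↔ x = y := by
  rw [mul_eq_zero, sub_eq_zero, sub_eq_zero, or_iff_right_iff_imp]
  exact fun h => (hφ.injOn hy hx h).symm

end StrictAnti

noncomputable def bose (x : ℝ) : ℝ := (exp x - 1)⁻¹

lemma bose_neg {x : ℝ} (hx : x ≠ 0) : bose (-x) = -1 - bose x := by
  have h : exp x - 1 ≠ 0 := by rw [sub_ne_zero, Ne, exp_eq_one_iff]; exact hx
  have h' : 1 - exp x ≠ 0 := by rw [← neg_sub]; exact neg_ne_zero.2 h
  rw [bose, bose, exp_neg]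
  field_simp
  ring

lemma bose_strictAntiOn : StrictAntiOn bose (Ioi 0) := by
  intro x (hx : 0 < x) y _ hxy
  have hx1 : 0 < exp x - 1 := by linarith [add_one_lt_exp hx.ne']
  exact inv_strictAnti₀ hx1 (by linarith [exp_lt_exp.2 hxy])

lemma cosh_sub_cosh_eq (u c : ℝ) :
    cosh c - cosh u = (exp u - exp c) * (1 - exp u * exp c) / (2 * exp u * exp c) := by
  rw [cosh_eq, cosh_eq, exp_neg, exp_neg]
  field_simp
  ring

lemma abs_lt_abs_of_lt_neg_abs {u c : ℝ} (h : c < -|u|) : |u| < |c| := by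
  rw [abs_of_neg (a := c) (by linarith [abs_nonneg u])]
  linarith

lemma cosh_ne_cosh_of_lt_neg_abs {u c : ℝ} (h : c < -|u|) : cosh c ≠ cosh u :=
  (cosh_lt_cosh.2 (abs_lt_abs_of_lt_neg_abs h)).ne'

lemma sub_pos_and_neg_sub_pos_of_lt_neg_abs {u c : ℝ} (h : c < -|u|) :
    0 < u - c ∧ 0 < -u - c := by
  constructor <;> linarith [neg_abs_le u, le_abs_self u]

noncomputable def hDensity (u c : ℝ) : ℝ := -sinh u / (cosh c - cosh u)

noncomputable def εDensity (u c : ℝ) : ℝ := -sinh c / (cosh c - cosh u) - 1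

lemma hDensity_eq_bose_sub_bose {u c : ℝ} (h₁ : u - c ≠ 0) (h₂ : -u - c ≠ 0) :
    hDensity u c = bose (u - c) - bose (-u - c) := by
  have hE : exp u - exp c ≠ 0 := sub_ne_zero.2 (exp_injective.ne (sub_ne_zero.1 h₁))
  have hF : 1 - exp u * exp c ≠ 0 := by
    rw [← exp_add, sub_ne_zero, ne_comm, Ne, exp_eq_one_iff]; contrapose! h₂; linarith
  rw [hDensity, cosh_sub_cosh_eq, bose, bose, sinh_eq, exp_sub, show -u - c = -(u + c) by ring,
    exp_neg, exp_neg, exp_add]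
  field_simp
  ring

lemma εDensity_eq_bose_add_bose {u c : ℝ} (h₁ : u - c ≠ 0) (h₂ : -u - c ≠ 0) :
    εDensity u c = bose (u - c) + bose (-u - c) := by
  have hswap := hDensity_eq_bose_sub_bose (u := c) (c := u) (by rwa [← neg_sub, neg_ne_zero])
    (by rwa [neg_sub_comm])
  rw [show c - u = -(u - c) by ring, show -c - u = -u - c by ring, bose_neg h₁] at hswap
  rw [εDensity, ← neg_sub (cosh u), div_neg, ← hDensity, hswap]
  ring

noncomputable def gradientPairing (u₁ c₁ u₂ c₂ : ℝ) : ℝ :=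
  (εDensity u₁ c₁ - εDensity u₂ c₂) * (c₁ - c₂) - (hDensity u₁ c₁ - hDensity u₂ c₂) * (u₁ - u₂)

lemma gradientPairing_eq {u₁ c₁ u₂ c₂ : ℝ} (h₁ : c₁ < -|u₁|) (h₂ : c₂ < -|u₂|) :
    gradientPairing u₁ c₁ u₂ c₂ =
      (bose (u₂ - c₂) - bose (u₁ - c₁)) * ((u₁ - c₁) - (u₂ - c₂))
        + (bose (-u₂ - c₂) - bose (-u₁ - c₁)) * ((-u₁ - c₁) - (-u₂ - c₂)) := by
  obtain ⟨p₁, q₁⟩ := sub_pos_and_neg_sub_pos_of_lt_neg_abs h₁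
  obtain ⟨p₂, q₂⟩ := sub_pos_and_neg_sub_pos_of_lt_neg_abs h₂
  rw [gradientPairing, εDensity_eq_bose_add_bose, εDensity_eq_bose_add_bose,
    hDensity_eq_bose_sub_bose, hDensity_eq_bose_sub_bose]
  · ring
  all_goals exact ne_of_gt ‹_›

lemma gradientPairing_nonneg {u₁ c₁ u₂ c₂ : ℝ} (h₁ : c₁ < -|u₁|) (h₂ : c₂ < -|u₂|) :
    0 ≤ gradientPairing u₁ c₁ u₂ c₂ := by
  obtain ⟨p₁, q₁⟩ := sub_pos_and_neg_sub_pos_of_lt_neg_abs h₁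
  obtain ⟨p₂, q₂⟩ := sub_pos_and_neg_sub_pos_of_lt_neg_abs h₂
  rw [gradientPairing_eq h₁ h₂]
  exact add_nonneg (bose_strictAntiOn.sub_mul_sub_nonneg p₁ p₂)
    (bose_strictAntiOn.sub_mul_sub_nonneg q₁ q₂)

lemma eq_of_gradientPairing_eq_zero {u₁ c₁ u₂ c₂ : ℝ} (h₁ : c₁ < -|u₁|) (h₂ : c₂ < -|u₂|)
    (h : gradientPairing u₁ c₁ u₂ c₂ = 0) : u₁ = u₂ ∧ c₁ = c₂ := by
  obtain ⟨p₁, q₁⟩ := sub_pos_and_neg_sub_pos_of_lt_neg_abs h₁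
  obtain ⟨p₂, q₂⟩ := sub_pos_and_neg_sub_pos_of_lt_neg_abs h₂
  rw [gradientPairing_eq h₁ h₂, add_eq_zero_iff_of_nonneg
    (bose_strictAntiOn.sub_mul_sub_nonneg p₁ p₂) (bose_strictAntiOn.sub_mul_sub_nonneg q₁ q₂),
    bose_strictAntiOn.sub_mul_sub_eq_zero_iff p₁ p₂,
    bose_strictAntiOn.sub_mul_sub_eq_zero_iff q₁ q₂] at h
  constructor <;> linarith [h.1, h.2]

section Continuity

variable {α : Type*} [TopologicalSpace α] {s : Set α}

lemma ContinuousOn.hDensity {u c : α → ℝ} (hu : ContinuousOn u s) (hc : ContinuousOn c s)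
    (h : ∀ x ∈ s, cosh (c x) ≠ cosh (u x)) : ContinuousOn (fun x => hDensity (u x) (c x)) s := by
  unfold _root_.hDensity
  exact (continuous_sinh.comp_continuousOn hu).neg.div
    ((continuous_cosh.comp_continuousOn hc).sub (continuous_cosh.comp_continuousOn hu))
    fun x hx => sub_ne_zero.2 (h x hx)

lemma ContinuousOn.εDensity {u c : α → ℝ} (hu : ContinuousOn u s) (hc : ContinuousOn c s)
    (h : ∀ x ∈ s, cosh (c x) ≠ cosh (u x)) : ContinuousOn (fun x => εDensity (u x) (c x)) s := by
  unfold _root_.εDensity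
  exact ((continuous_sinh.comp_continuousOn hc).neg.div
    ((continuous_cosh.comp_continuousOn hc).sub (continuous_cosh.comp_continuousOn hu))
    fun x hx => sub_ne_zero.2 (h x hx)).sub continuousOn_const

lemma ContinuousOn.gradientPairing {u₁ c₁ u₂ c₂ : α → ℝ} (hu₁ : ContinuousOn u₁ s)
    (hc₁ : ContinuousOn c₁ s) (hu₂ : ContinuousOn u₂ s) (hc₂ : ContinuousOn c₂ s)
    (h₁ : ∀ x ∈ s, cosh (c₁ x) ≠ cosh (u₁ x)) (h₂ : ∀ x ∈ s, cosh (c₂ x) ≠ cosh (u₂ x)) :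
    ContinuousOn (fun x => gradientPairing (u₁ x) (c₁ x) (u₂ x) (c₂ x)) s :=
  (((hu₁.εDensity hc₁ h₁).sub (hu₂.εDensity hc₂ h₂)).mul (hc₁.sub hc₂)).sub
    (((hu₁.hDensity hc₁ h₁).sub (hu₂.hDensity hc₂ h₂)).mul (hu₁.sub hu₂))

end Continuity

lemma setIntegral_sum_gradientPairing_eq_zero {α ι : Type*} [MeasurableSpace α] [Fintype ι]
    {μ : Measure α} {s : Set α} (hs : MeasurableSet s) {u v : α → ℝ} {c d : ι → ℝ}
    (hu : ∀ σ, IntegrableOn (fun x => εDensity (u x) (c σ)) s μ)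
    (hv : ∀ σ, IntegrableOn (fun x => εDensity (v x) (d σ)) s μ)
    (hh : ∀ x ∈ s, ∑ σ, hDensity (u x) (c σ) = ∑ σ, hDensity (v x) (d σ))
    (hε : ∀ σ, ∫ x in s, εDensity (u x) (c σ) ∂μ = ∫ x in s, εDensity (v x) (d σ) ∂μ) :
    ∫ x in s, ∑ σ, gradientPairing (u x) (c σ) (v x) (d σ) ∂μ = 0 := by
  have hpt : ∀ x ∈ s, ∑ σ, gradientPairing (u x) (c σ) (v x) (d σ)
      = ∑ σ, (εDensity (u x) (c σ) - εDensity (v x) (d σ)) * (c σ - d σ) := by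
    intro x hx
    simp only [gradientPairing, Finset.sum_sub_distrib, ← Finset.sum_mul, hh x hx, sub_self,
      zero_mul, sub_zero]
  rw [setIntegral_congr_fun hs hpt, integral_finsetSum]
  · refine Finset.sum_eq_zero fun σ _ => ?_
    rw [integral_mul_const, integral_sub (hu σ) (hv σ), hε σ, sub_self, zero_mul]
  · exact fun σ _ => ((hu σ).sub (hv σ)).mul_const _

lemma ContinuousOn.eqOn_zero_of_nonneg_of_setIntegral_Icc_eq_zero {φ : ℝ → ℝ} {a b : ℝ}
    (hφ : ContinuousOn φ (Icc a b)) (hab : a ≠ b) (h0 : ∀ x ∈ Icc a b, 0 ≤ φ x)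
    (hint : ∫ x in Icc a b, φ x = 0) : EqOn φ 0 (Icc a b) := by
  have hae : φ =ᵐ[volume.restrict (Icc a b)] 0 :=
    (setIntegral_eq_zero_iff_of_nonneg_ae ((ae_restrict_iff' measurableSet_Icc).2 (ae_of_all _ h0))
      hφ.integrableOn_Icc).1 hint
  exact Measure.eqOn_Icc_of_ae_eq volume hab hae hφ continuousOn_const

theorem stationary_params_injective (N : ℕ) (hN : 1 ≤ N)
    (f g : ℝ → ℝ)
    (hf : ContinuousOn f (Set.Icc (-(1:ℝ)/4) (1/4)))
    (hg : ContinuousOn g (Set.Icc (-(1:ℝ)/4) (1/4)))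
    (a b : Fin N → ℝ)
    (ha : ∀ k ∈ Set.Icc (-(1:ℝ)/4) (1/4), ∀ σ, a σ < -|f k|)
    (hb : ∀ k ∈ Set.Icc (-(1:ℝ)/4) (1/4), ∀ σ, b σ < -|g k|)
    (hh : ∀ k ∈ Set.Icc (-(1:ℝ)/4) (1/4),
      ∑ σ, (-Real.sinh (f k)) / (Real.cosh (a σ) - Real.cosh (f k))
        = ∑ σ, (-Real.sinh (g k)) / (Real.cosh (b σ) - Real.cosh (g k)))
    (hε : ∀ σ,
      ∫ k in Set.Icc (-(1:ℝ)/4) (1/4),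
          (-Real.sinh (a σ) / (Real.cosh (a σ) - Real.cosh (f k)) - 1)
        = ∫ k in Set.Icc (-(1:ℝ)/4) (1/4),
          (-Real.sinh (b σ) / (Real.cosh (b σ) - Real.cosh (g k)) - 1)) :
    (∀ k ∈ Set.Icc (-(1:ℝ)/4) (1/4), f k = g k) ∧ a = b := by
  set I := Icc (-(1:ℝ)/4) (1/4)
  have hfa σ : ∀ k ∈ I, cosh (a σ) ≠ cosh (f k) :=
    fun k hk => cosh_ne_cosh_of_lt_neg_abs (ha k hk σ)
  have hgb σ : ∀ k ∈ I, cosh (b σ) ≠ cosh (g k) :=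
    fun k hk => cosh_ne_cosh_of_lt_neg_abs (hb k hk σ)
  have hpairing_nonneg k (hk : k ∈ I) σ : 0 ≤ gradientPairing (f k) (a σ) (g k) (b σ) :=
    gradientPairing_nonneg (ha k hk σ) (hb k hk σ)
  have hsum_zero : EqOn (fun k => ∑ σ, gradientPairing (f k) (a σ) (g k) (b σ)) 0 I := by
    refine ContinuousOn.eqOn_zero_of_nonneg_of_setIntegral_Icc_eq_zero ?_ (by norm_num)
      (fun k hk => Finset.sum_nonneg fun σ _ => hpairing_nonneg k hk σ) ?_
    · exact continuousOn_finsetSum _ fun σ _ =>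
        hf.gradientPairing continuousOn_const hg continuousOn_const (hfa σ) (hgb σ)
    · exact setIntegral_sum_gradientPairing_eq_zero measurableSet_Icc
        (fun σ => (hf.εDensity continuousOn_const (hfa σ)).integrableOn_Icc)
        (fun σ => (hg.εDensity continuousOn_const (hgb σ)).integrableOn_Icc) hh hε
  have hpair : ∀ k ∈ I, ∀ σ, f k = g k ∧ a σ = b σ := fun k hk σ =>
    eq_of_gradientPairing_eq_zero (ha k hk σ) (hb k hk σ)
      ((Finset.sum_eq_zero_iff_of_nonneg fun σ _ => hpairing_nonneg k hk σ).1 (hsum_zero hk) σ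
        (Finset.mem_univ σ))
  exact ⟨fun k hk => (hpair k hk ⟨0, hN⟩).1, funext fun σ => (hpair 0 (by norm_num [I]) σ).2⟩
end

section
/- Let ω(k) = 1 − cos(2πk) and suppose k₁, k₂, k₃, k₄ ∈ ℝ satisfy k₁ − k₂ + k₃ − k₄ ∈ ℤ and ω(k₁) − ω(k₂) + ω(k₃) − ω(k₄) = 0. Then at least one of the following holds: (i) k₁ − k₂ ∈ ℤ and k₃ − k₄ ∈ ℤ; (ii) k₁ − k₄ ∈ ℤ and k₃ − k₂ ∈ ℤ; (iii) k₁ + k₃ − 1/2 ∈ ℤ and k₂ + k₄ − 1/2 ∈ ℤ. -/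
open Complex Real

private lemma exp_two_pi_eq_aux {x y : ℝ}
    (h : Complex.exp (2 * π * x * Complex.I) = Complex.exp (2 * π * y * Complex.I)) :
    ∃ n : ℤ, x - y = n := by
  rw [Complex.exp_eq_exp_iff_exists_int] at h
  obtain ⟨n, hn⟩ := h
  refine ⟨n, ?_⟩
  have h2 : ((x - y - n : ℝ) : ℂ) * (2 * π * Complex.I) = 0 := by
    push_cast
    linear_combination hn
  have hπ : (2 * (π : ℂ) * Complex.I) ≠ 0 := by
    simp [Real.pi_ne_zero, Complex.I_ne_zero]
  have h3 : ((x - y - n : ℝ) : ℂ) = 0 := (mul_eq_zero.mp h2).resolve_right hπ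
  have h4 : x - y - n = 0 := by exact_mod_cast h3
  linarith

private lemma exp_eq_neg_one_aux {x : ℝ}
    (h : Complex.exp (2 * π * x * Complex.I) = -1) : ∃ n : ℤ, x - 1/2 = n := by
  rw [← Complex.exp_pi_mul_I, Complex.exp_eq_exp_iff_exists_int] at h
  obtain ⟨n, hn⟩ := h
  refine ⟨n, ?_⟩
  have h2 : ((x - 1/2 - n : ℝ) : ℂ) * (2 * π * Complex.I) = 0 := by
    push_cast
    linear_combination hn
  have hπ : (2 * (π : ℂ) * Complex.I) ≠ 0 := by
    simp [Real.pi_ne_zero, Complex.I_ne_zero]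
  have h3 : ((x - 1/2 - n : ℝ) : ℂ) = 0 := (mul_eq_zero.mp h2).resolve_right hπ
  have h4 : x - 1/2 - n = 0 := by exact_mod_cast h3
  linarith

private lemma exp_add_inv_aux (x : ℝ) :
    Complex.exp (2 * π * x * Complex.I) + (Complex.exp (2 * π * x * Complex.I))⁻¹
      = 2 * (Real.cos (2 * π * x) : ℂ) := by
  rw [← Complex.exp_neg, Complex.ofReal_cos, Complex.cos]
  push_cast
  ring_nf

theorem collision_classification (k₁ k₂ k₃ k₄ : ℝ)
    (hk : ∃ n : ℤ, k₁ - k₂ + k₃ - k₄ = n)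
    (hω : (1 - Real.cos (2 * Real.pi * k₁)) - (1 - Real.cos (2 * Real.pi * k₂))
        + (1 - Real.cos (2 * Real.pi * k₃)) - (1 - Real.cos (2 * Real.pi * k₄)) = 0) :
    ((∃ n : ℤ, k₁ - k₂ = n) ∧ (∃ n : ℤ, k₃ - k₄ = n))
    ∨ ((∃ n : ℤ, k₁ - k₄ = n) ∧ (∃ n : ℤ, k₃ - k₂ = n))
    ∨ ((∃ n : ℤ, k₁ + k₃ - 1/2 = n) ∧ (∃ n : ℤ, k₂ + k₄ - 1/2 = n)) := by
  obtain ⟨m, hm⟩ := hk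
  set a := Complex.exp (2 * π * k₁ * Complex.I) with ha_def
  set b := Complex.exp (2 * π * k₂ * Complex.I) with hb_def
  set c := Complex.exp (2 * π * k₃ * Complex.I) with hc_def
  set d := Complex.exp (2 * π * k₄ * Complex.I) with hd_def
  have ha : a ≠ 0 := Complex.exp_ne_zero _
  have hb : b ≠ 0 := Complex.exp_ne_zero _
  have hc : c ≠ 0 := Complex.exp_ne_zero _
  have hd : d ≠ 0 := Complex.exp_ne_zero _
  have hac : a * c = Complex.exp (2 * π * ((k₁ + k₃ : ℝ) : ℂ) * Complex.I) := by
    rw [ha_def, hc_def, ← Complex.exp_add]; push_cast; ring_nf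
  have hbd : b * d = Complex.exp (2 * π * ((k₂ + k₄ : ℝ) : ℂ) * Complex.I) := by
    rw [hb_def, hd_def, ← Complex.exp_add]; push_cast; ring_nf
  have hmc : (k₁ : ℂ) - k₂ + k₃ - k₄ = (m : ℂ) := by exact_mod_cast hm
  have hP : a * c = b * d := by
    rw [hac, hbd, Complex.exp_eq_exp_iff_exists_int]
    exact ⟨m, by push_cast; linear_combination (2 * (π:ℂ) * Complex.I) * hmc⟩
  have hωc : (Real.cos (2 * π * k₁) : ℂ) + (Real.cos (2 * π * k₃) : ℂ)
      = (Real.cos (2 * π * k₂) : ℂ) + (Real.cos (2 * π * k₄) : ℂ) := by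
    have : Real.cos (2 * π * k₁) + Real.cos (2 * π * k₃)
        = Real.cos (2 * π * k₂) + Real.cos (2 * π * k₄) := by linarith
    exact_mod_cast this
  have hE : a + a⁻¹ + (c + c⁻¹) = b + b⁻¹ + (d + d⁻¹) := by
    rw [ha_def, hb_def, hc_def, hd_def, exp_add_inv_aux, exp_add_inv_aux,
      exp_add_inv_aux, exp_add_inv_aux]
    linear_combination 2 * hωc
  have key' : (a * c) * ((a + c - (b + d)) * (a * c + 1)) = 0 := by
    field_simp at hE
    linear_combination hE + ((a + c) * (a * c + 1) - (b + d) * (a * c)) * hP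
  have key : (a + c - (b + d)) * (a * c + 1) = 0 :=
    (mul_eq_zero.mp key').resolve_left (mul_ne_zero ha hc)
  rcases mul_eq_zero.mp key with hsum | hneg
  · -- a + c = b + d, so {a,c} = {b,d}
    have hsum' : a + c = b + d := by linear_combination hsum
    have hfac : (a - b) * (a - d) = 0 := by linear_combination a * hsum' - hP
    rcases mul_eq_zero.mp hfac with h1 | h1
    · left
      have hab : a = b := by linear_combination h1
      have hcd : c = d := by linear_combination hsum' - hab
      exact ⟨exp_two_pi_eq_aux (ha_def ▸ hb_def ▸ hab),
             exp_two_pi_eq_aux (hc_def ▸ hd_def ▸ hcd)⟩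
    · right; left
      have had : a = d := by linear_combination h1
      have hcb : c = b := by linear_combination hsum' - had
      exact ⟨exp_two_pi_eq_aux (ha_def ▸ hd_def ▸ had),
             exp_two_pi_eq_aux (hc_def ▸ hb_def ▸ hcb)⟩
  · right; right
    have h13 : Complex.exp (2 * π * ((k₁ + k₃ : ℝ) : ℂ) * Complex.I) = -1 := by
      rw [← hac]; linear_combination hneg
    have h24 : Complex.exp (2 * π * ((k₂ + k₄ : ℝ) : ℂ) * Complex.I) = -1 := by
      rw [← hbd, ← hP]; linear_combination hneg
    exact ⟨exp_eq_neg_one_aux h13, exp_eq_neg_one_aux h24⟩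
end

section
/- Let ω(k) = 1 − cos(2πk) and let φ : ℝ → ℝ be 1-periodic with φ(k) = −φ(1/2 − k) for all k ∈ ℝ. If k₁, k₂, k₃, k₄ ∈ ℝ satisfy k₁ − k₂ + k₃ − k₄ ∈ ℤ and ω(k₁) − ω(k₂) + ω(k₃) − ω(k₄) = 0, then φ(k₁) − φ(k₂) + φ(k₃) − φ(k₄) = 0. -/
theorem additional_conservation_laws (φ : ℝ → ℝ)
    (hper : ∀ k, φ (k + 1) = φ k)
    (hrefl : ∀ k, φ k = -φ (1/2 - k))
    (k₁ k₂ k₃ k₄ : ℝ)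
    (hk : ∃ n : ℤ, k₁ - k₂ + k₃ - k₄ = n)
    (hω : (1 - Real.cos (2 * Real.pi * k₁)) - (1 - Real.cos (2 * Real.pi * k₂))
        + (1 - Real.cos (2 * Real.pi * k₃)) - (1 - Real.cos (2 * Real.pi * k₄)) = 0) :
    φ k₁ - φ k₂ + φ k₃ - φ k₄ = 0 := by
  obtain ⟨n, hn⟩ := hk
  have hP : Function.Periodic φ 1 := hper
  have hint : ∀ (x : ℝ) (m : ℤ), φ (x + m) = φ x := by
    intro x m
    simpa [mul_one] using (hP.int_mul m) x
  set π := Real.pi with hπdef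
  have hπ : π ≠ 0 := Real.pi_ne_zero
  -- rewrite hω using sum-to-product
  have h13 : Real.cos (2*π*k₁) + Real.cos (2*π*k₃)
      = 2 * Real.cos (π*(k₁+k₃)) * Real.cos (π*(k₁-k₃)) := by
    rw [Real.cos_add_cos]
    congr 2 <;> ring
  have h24 : Real.cos (2*π*k₂) + Real.cos (2*π*k₄)
      = 2 * Real.cos (π*(k₂+k₄)) * Real.cos (π*(k₂-k₄)) := by
    rw [Real.cos_add_cos]
    congr 2 <;> ring
  have hsum : π*(k₁+k₃) = π*(k₂+k₄) + n * π := by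
    have : k₁ + k₃ = k₂ + k₄ + n := by linarith
    rw [this]; ring
  have hA : Real.cos (π*(k₁+k₃)) = (-1)^n * Real.cos (π*(k₂+k₄)) := by
    rw [hsum, Real.cos_add_int_mul_pi]
  have key : Real.cos (π*(k₂+k₄)) *
      ((-1)^n * Real.cos (π*(k₁-k₃)) - Real.cos (π*(k₂-k₄))) = 0 := by
    have h1 : Real.cos (2*π*k₁) + Real.cos (2*π*k₃)
        = Real.cos (2*π*k₂) + Real.cos (2*π*k₄) := by linarith
    rw [h13, h24, hA] at h1
    ring_nf at h1 ⊢
    linarith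
  rcases mul_eq_zero.1 key with hC | hB
  · -- k₂+k₄ ≡ 1/2 mod 1, and so is k₁+k₃
    obtain ⟨m, hm⟩ := Real.cos_eq_zero_iff.1 hC
    have hm' : k₂ + k₄ = m + 1/2 := by
      have := mul_left_cancel₀ hπ (show π*(k₂+k₄) = π*((m:ℝ)+1/2) by
        rw [hm]; ring)
      linarith
    have hm2 : k₁ + k₃ = (m + n : ℤ) + 1/2 := by push_cast; linarith
    have e1 : φ k₁ = -φ k₃ := by
      rw [hrefl k₁]
      have : (1:ℝ)/2 - k₁ = k₃ + (-(m+n) : ℤ) := by push_cast; linarith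
      rw [this, hint]
    have e2 : φ k₂ = -φ k₄ := by
      rw [hrefl k₂]
      have : (1:ℝ)/2 - k₂ = k₄ + (-m : ℤ) := by push_cast; linarith
      rw [this, hint]
    rw [e1, e2]; ring
  · have hB' : Real.cos (π*(k₂-k₄)) = Real.cos (π*(k₁-k₃) + n * π) := by
      rw [Real.cos_add_int_mul_pi]
      linarith
    obtain ⟨m, hm | hm⟩ := Real.cos_eq_cos_iff.1 hB'
    · -- k₁ ≡ k₂, k₃ ≡ k₄
      have hd : k₁ - k₃ + n = 2*m + (k₂ - k₄) := by
        have := mul_right_cancel₀ hπ (show (k₁-k₃+n)*π = (2*(m:ℝ)+(k₂-k₄))*π by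
          linear_combination hm)
        linarith
      have e1 : φ k₁ = φ k₂ := by
        have : k₁ = k₂ + (m : ℝ) := by linarith
        rw [this]; exact_mod_cast hint k₂ m
      have e2 : φ k₃ = φ k₄ := by
        have : k₃ = k₄ + ((n - m : ℤ) : ℝ) := by push_cast; linarith
        rw [this]; exact hint k₄ (n - m)
      rw [e1, e2]; ring
    · -- k₁ ≡ k₄, k₃ ≡ k₂
      have hd : k₁ - k₃ + n = 2*m - (k₂ - k₄) := by
        have := mul_right_cancel₀ hπ (show (k₁-k₃+n)*π = (2*(m:ℝ)-(k₂-k₄))*π by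
          linear_combination hm)
        linarith
      have e1 : φ k₁ = φ k₄ := by
        have : k₁ = k₄ + (m : ℝ) := by linarith
        rw [this]; exact_mod_cast hint k₄ m
      have e2 : φ k₃ = φ k₂ := by
        have : k₃ = k₂ + ((n - m : ℤ) : ℝ) := by push_cast; linarith
        rw [this]; exact hint k₂ (n - m)
      rw [e1, e2]; ring
end

section
/- Let ω(k) = 1 − cos(2πk), let f : ℝ → ℝ be 1-periodic with f(k) = −f(1/2 − k) for all k, and let a, b ∈ ℝ satisfy f(k) − a > 0 and f(k) − b > 0 for all k. Define λ(k) = 1/(exp(f(k) − a) − 1) and μ(k) = 1/(exp(f(k) − b) − 1). Then for all k₁, k₂, k₃, k₄ ∈ ℝ with k₁ − k₂ + k₃ − k₄ ∈ ℤ and ω(k₁) − ω(k₂) + ω(k₃) − ω(k₄) = 0, one has (1+λ(k₁))·λ(k₂)·(1+μ(k₃))·μ(k₄) = λ(k₁)·(1+λ(k₂))·μ(k₃)·(1+μ(k₄)). -/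
/-!
The occupation `n(x) = 1 / (eˣ - 1)` satisfies `1 + n(x) = eˣ n(x)`, so detailed balance reduces to
`(f k₁ - a) + (f k₃ - b) = (f k₂ - a) + (f k₄ - b)`, i.e. to `f` being a collision invariant.
Since `cos 2πk₁ + cos 2πk₃ = 2 cos π(k₁ + k₃) cos π(k₁ - k₃)`, momentum conservation fixes the first
factor up to sign, so energy conservation either matches the second factors, and then
`{k₁, k₃} ≡ {k₂, k₄}` mod 1, or forces `k₁ + k₃ ≡ k₂ + k₄ ≡ 1/2` mod 1, where the reflection
symmetry `f k = -f (1/2 - k)` makes both sides vanish.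
-/

open Real

theorem cos_two_pi_mul_add_cos_two_pi_mul (x y : ℝ) :
    cos (2 * π * x) + cos (2 * π * y) = 2 * cos (π * (x + y)) * cos (π * (x - y)) := by
  rw [cos_add_cos]
  ring_nf

theorem exists_int_eq_half_add_of_cos_pi_mul_eq_zero {x : ℝ} (h : cos (π * x) = 0) :
    ∃ m : ℤ, x = 1 / 2 + m := by
  obtain ⟨m, hm⟩ := cos_eq_zero_iff.mp h
  refine ⟨m, mul_left_cancel₀ pi_ne_zero ?_⟩
  linear_combination hm

theorem cos_two_pi_resonance {k₁ k₂ k₃ k₄ : ℝ} {n : ℤ} (hmom : k₁ - k₂ + k₃ - k₄ = n)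
    (hen : cos (2 * π * k₁) + cos (2 * π * k₃) = cos (2 * π * k₂) + cos (2 * π * k₄)) :
    ((∃ m : ℤ, k₁ = k₂ + m) ∧ ∃ m : ℤ, k₃ = k₄ + m) ∨
    ((∃ m : ℤ, k₁ = k₄ + m) ∧ ∃ m : ℤ, k₃ = k₂ + m) ∨
    ((∃ m : ℤ, k₁ + k₃ = 1 / 2 + m) ∧ ∃ m : ℤ, k₂ + k₄ = 1 / 2 + m) := by
  have hsum : cos (π * (k₁ + k₃)) = (-1) ^ n * cos (π * (k₂ + k₄)) := by
    rw [← cos_add_int_mul_pi]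
    congr 1
    linear_combination π * hmom
  rw [cos_two_pi_mul_add_cos_two_pi_mul, cos_two_pi_mul_add_cos_two_pi_mul, hsum] at hen
  have hfactor : cos (π * (k₂ + k₄)) *
      ((-1) ^ n * cos (π * (k₁ - k₃)) - cos (π * (k₂ - k₄))) = 0 := by
    linear_combination hen / 2
  rcases mul_eq_zero.mp hfactor with hzero | hdiff
  · refine Or.inr (Or.inr ⟨?_, exists_int_eq_half_add_of_cos_pi_mul_eq_zero hzero⟩)
    exact exists_int_eq_half_add_of_cos_pi_mul_eq_zero (by rw [hsum, hzero, mul_zero])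
  · have hcos : cos (π * (k₁ - k₃) + n * π) = cos (π * (k₂ - k₄)) := by
      rw [cos_add_int_mul_pi]
      linear_combination hdiff
    obtain ⟨m, hm | hm⟩ := cos_eq_cos_iff.mp hcos
    · have h : k₂ - k₄ = 2 * m + (k₁ - k₃) + n := mul_left_cancel₀ pi_ne_zero (by
        linear_combination hm)
      left
      exact ⟨⟨-m, by push_cast; linarith⟩, ⟨n + m, by push_cast; linarith⟩⟩
    · have h : k₂ - k₄ = 2 * m - (k₁ - k₃) - n := mul_left_cancel₀ pi_ne_zero (by
        linear_combination hm)
      right; left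
      exact ⟨⟨m, by linarith⟩, ⟨n - m, by push_cast; linarith⟩⟩

theorem add_eq_add_of_cos_two_pi_resonance {f : ℝ → ℝ} (hper : Function.Periodic f 1)
    (hrefl : ∀ k, f k = -f (1 / 2 - k)) {k₁ k₂ k₃ k₄ : ℝ} {n : ℤ}
    (hmom : k₁ - k₂ + k₃ - k₄ = n)
    (hen : cos (2 * π * k₁) + cos (2 * π * k₃) = cos (2 * π * k₂) + cos (2 * π * k₄)) :
    f k₁ + f k₃ = f k₂ + f k₄ := by
  have hshift (x : ℝ) (m : ℤ) : f (x + m) = f x := by simpa using hper.int_mul m x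
  have hhalf {x y : ℝ} : (∃ m : ℤ, x + y = 1 / 2 + m) → f x + f y = 0 := by
    rintro ⟨m, hm⟩
    rw [show y = 1 / 2 - x + m by linarith, hshift, hrefl x, neg_add_cancel]
  rcases cos_two_pi_resonance hmom hen with
    ⟨⟨m₁, rfl⟩, ⟨m₃, rfl⟩⟩ | ⟨⟨m₁, rfl⟩, ⟨m₃, rfl⟩⟩ | ⟨h₁₃, h₂₄⟩
  · rw [hshift, hshift]
  · rw [hshift, hshift, add_comm]
  · rw [hhalf h₁₃, hhalf h₂₄]

noncomputable def boseEinstein (x : ℝ) : ℝ := 1 / (exp x - 1)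

theorem one_add_boseEinstein {x : ℝ} (hx : x ≠ 0) :
    1 + boseEinstein x = exp x * boseEinstein x := by
  have hx' : exp x - 1 ≠ 0 := sub_ne_zero.mpr (by simpa using hx)
  unfold boseEinstein
  field_simp
  ring

theorem boseEinstein_detailed_balance {x₁ x₂ x₃ x₄ : ℝ} (h₁ : x₁ ≠ 0) (h₂ : x₂ ≠ 0)
    (h₃ : x₃ ≠ 0) (h₄ : x₄ ≠ 0) (h : x₁ + x₃ = x₂ + x₄) :
    (1 + boseEinstein x₁) * boseEinstein x₂ * (1 + boseEinstein x₃) * boseEinstein x₄ =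
      boseEinstein x₁ * (1 + boseEinstein x₂) * boseEinstein x₃ * (1 + boseEinstein x₄) := by
  have hexp : exp x₁ * exp x₃ = exp x₂ * exp x₄ := by rw [← exp_add, ← exp_add, h]
  simp only [one_add_boseEinstein, h₁, h₂, h₃, h₄, ne_eq, not_false_eq_true]
  linear_combination
    boseEinstein x₁ * boseEinstein x₂ * boseEinstein x₃ * boseEinstein x₄ * hexp

theorem nonthermal_detailed_balance (f : ℝ → ℝ)
    (hper : ∀ k, f (k + 1) = f k)
    (hrefl : ∀ k, f k = -f (1/2 - k))
    (a b : ℝ)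
    (ha : ∀ k, 0 < f k - a) (hb : ∀ k, 0 < f k - b)
    (lam : ℝ → ℝ) (mu : ℝ → ℝ)
    (hlam : ∀ k, lam k = 1 / (Real.exp (f k - a) - 1))
    (hmu : ∀ k, mu k = 1 / (Real.exp (f k - b) - 1)) :
    ∀ k₁ k₂ k₃ k₄ : ℝ, (∃ n : ℤ, k₁ - k₂ + k₃ - k₄ = n) →
      (1 - Real.cos (2 * Real.pi * k₁)) - (1 - Real.cos (2 * Real.pi * k₂))
        + (1 - Real.cos (2 * Real.pi * k₃)) - (1 - Real.cos (2 * Real.pi * k₄)) = 0 →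
      (1 + lam k₁) * lam k₂ * (1 + mu k₃) * mu k₄
        = lam k₁ * (1 + lam k₂) * mu k₃ * (1 + mu k₄) := by
  rintro k₁ k₂ k₃ k₄ ⟨n, hmom⟩ hen
  have hinv : f k₁ + f k₃ = f k₂ + f k₄ :=
    add_eq_add_of_cos_two_pi_resonance hper hrefl hmom (by linear_combination -hen)
  rw [hlam, hlam, hmu, hmu]
  exact boseEinstein_detailed_balance (ha k₁).ne' (ha k₂).ne' (hb k₃).ne' (hb k₄).ne'
    (by linear_combination hinv)
end

section
/- Let f : ℝ → ℝ be continuous, 1-periodic, and satisfy f(k) = −f(1/2 − k) for all k, and let a ∈ ℝ satisfy a < −|f(k)| for all k. Then ∫_{−1/2}^{1/2} 1/(exp(f(k) − a) − 1) dk = ∫_{−1/4}^{1/4} ( −sinh(a)/(cosh(a) − cosh f(k)) − 1 ) dk. -/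
lemma key_alg (a x : ℝ) (h : a < -|x|) :
    1 / (Real.exp (x - a) - 1) + 1 / (Real.exp (-x - a) - 1)
      = -Real.sinh a / (Real.cosh a - Real.cosh x) - 1 := by
  have hx1 : a < x := lt_of_lt_of_le h (neg_abs_le x)
  have hx2 : a < -x := lt_of_lt_of_le h (by simpa using neg_abs_le (-x))
  have h1 : Real.exp (x - a) - 1 ≠ 0 := by
    have : (1:ℝ) < Real.exp (x - a) := by rw [Real.one_lt_exp_iff]; linarith
    linarith
  have h2 : Real.exp (-x - a) - 1 ≠ 0 := by
    have : (1:ℝ) < Real.exp (-x - a) := by rw [Real.one_lt_exp_iff]; linarith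
    linarith
  have hc : Real.cosh x < Real.cosh a := by
    rw [Real.cosh_lt_cosh]
    have h0 : a < 0 := lt_of_lt_of_le h (neg_nonpos_of_nonneg (abs_nonneg x))
    rw [abs_of_nonpos h0.le]; linarith
  have h3 : Real.cosh a - Real.cosh x ≠ 0 := by linarith
  have e1 := Real.exp_ne_zero a
  have e2 := Real.exp_ne_zero x
  have h1' : Real.exp x - Real.exp a ≠ 0 :=
    ne_of_gt (sub_pos.mpr (Real.exp_lt_exp.mpr hx1))
  have h2' : 1 - Real.exp a * Real.exp x ≠ 0 := by
    have : Real.exp a * Real.exp x < 1 := by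
      rw [← Real.exp_add, ← Real.exp_zero, Real.exp_lt_exp]; linarith
    linarith
  rw [div_add_div _ _ h1 h2, div_sub_one h3, div_eq_div_iff (mul_ne_zero h1 h2) h3]
  rw [Real.sinh_eq, Real.cosh_eq, Real.cosh_eq,
    show -x - a = -(x + a) by ring]
  simp only [Real.exp_neg, Real.exp_add, Real.exp_sub]
  field_simp
  ring

theorem spin_density_half_zone (f : ℝ → ℝ) (hf : Continuous f)
    (hper : ∀ k, f (k + 1) = f k)
    (hrefl : ∀ k, f k = -f (1/2 - k))
    (a : ℝ) (ha : ∀ k, a < -|f k|) :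
    ∫ k in (-(1:ℝ)/2)..(1/2), 1 / (Real.exp (f k - a) - 1)
      = ∫ k in (-(1:ℝ)/4)..(1/4),
          (-Real.sinh a / (Real.cosh a - Real.cosh (f k)) - 1) := by
  set g : ℝ → ℝ := fun k => 1 / (Real.exp (f k - a) - 1) with hg
  have hne : ∀ k, Real.exp (f k - a) - 1 ≠ 0 := by
    intro k
    have h1 : a < f k := lt_of_lt_of_le (ha k) (neg_abs_le (f k))
    have : (1:ℝ) < Real.exp (f k - a) := by rw [Real.one_lt_exp_iff]; linarith
    linarith
  have hgc : Continuous g :=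
    continuous_const.div (((hf.sub continuous_const).rexp).sub continuous_const) hne
  have hg_per : Function.Periodic g 1 := fun k => by simp [hg, hper k]
  -- shift the integration window by periodicity
  have step1 : (∫ k in (-(1:ℝ)/2)..(1/2), g k) = ∫ k in (-(1:ℝ)/4)..(3/4), g k := by
    have := hg_per.intervalIntegral_add_eq (-(1:ℝ)/2) (-(1:ℝ)/4)
    norm_num at this
    convert this using 2 <;> norm_num
  -- reflection
  have step2 : (∫ k in ((1:ℝ)/4)..(3/4), g k)
      = ∫ k in (-(1:ℝ)/4)..(1/4), g (1/2 - k) := by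
    rw [intervalIntegral.integral_comp_sub_left g (1/2)]
    norm_num
  have hint : ∀ u v : ℝ, IntervalIntegrable g MeasureTheory.volume u v :=
    fun u v => hgc.intervalIntegrable u v
  have hint2 : IntervalIntegrable (fun k => g (1/2 - k)) MeasureTheory.volume
      (-(1:ℝ)/4) (1/4) :=
    (hgc.comp (continuous_const.sub continuous_id)).intervalIntegrable _ _
  have split : (∫ k in (-(1:ℝ)/4)..(3/4), g k)
      = (∫ k in (-(1:ℝ)/4)..(1/4), g k) + ∫ k in ((1:ℝ)/4)..(3/4), g k :=
    (intervalIntegral.integral_add_adjacent_intervals (hint _ _) (hint _ _)).symm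
  rw [step1, split, step2, ← intervalIntegral.integral_add (hint _ _) hint2]
  apply intervalIntegral.integral_congr
  intro k _
  have hr : f (1/2 - k) = -f k := by rw [hrefl k]; ring
  simp only [hg, hr]
  have := key_alg a (f k) (ha k)
  rw [show -f k - a = -(f k) - a by ring] at this
  exact this
end
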